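/- arXiv:2211.17172 — 3 statements merged into one kernel-verified Lean document; each statement's English description precedes it below -/
import Mathlib

section
/- Let φ : ℝ^n → ℝ^m be a surjective linear map and let σ ⊆ ℝ^n be a convex cone. If σ ⊄ ker(φ) and ker(φ) ∩ relint(σ) ≠ ∅, then the image cone φ(σ) contains a nonzero vector v together with its negative −v (i.e., φ(σ) is not strongly convex). -/
/-- If a convex cone `σ` in `ℝⁿ` is not contained in the kernel of a surjective
linear map `φ : ℝⁿ → ℝᵐ`, but the kernel meets the relative interior of `σ`,
then the image cone `φ(σ)` contains a nonzero vector together with its negative,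
i.e. `φ(σ)` is not strongly convex. -/
theorem stmt_0 {n m : ℕ} (φ : (Fin n → ℝ) →ₗ[ℝ] (Fin m → ℝ))
    (hφ : Function.Surjective φ) (σ : ConvexCone ℝ (Fin n → ℝ))
    (h1 : ¬ (σ : Set (Fin n → ℝ)) ⊆ (LinearMap.ker φ : Set (Fin n → ℝ)))
    (h2 : ((LinearMap.ker φ : Set (Fin n → ℝ)) ∩
      intrinsicInterior ℝ (σ : Set (Fin n → ℝ))).Nonempty) :
    ∃ v : Fin m → ℝ, v ≠ 0 ∧ v ∈ φ '' (σ : Set (Fin n → ℝ)) ∧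
      -v ∈ φ '' (σ : Set (Fin n → ℝ)) := by
  obtain ⟨x, hxker, hxint⟩ := h2
  obtain ⟨y, hyσ, hyker⟩ := Set.not_subset.mp h1
  have hxσ : x ∈ (σ : Set (Fin n → ℝ)) := intrinsicInterior_subset hxint
  have hφy : φ y ≠ 0 := fun h => hyker (LinearMap.mem_ker.mpr h)
  have hφx : φ x = 0 := hxker
  -- the intrinsic interior as interior in the affine span
  set S := affineSpan ℝ (σ : Set (Fin n → ℝ)) with hS
  rw [mem_intrinsicInterior] at hxint
  obtain ⟨x', hx'int, hx'val⟩ := hxint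
  have hxS : x ∈ S := subset_affineSpan ℝ _ hxσ
  have hyS : y ∈ S := subset_affineSpan ℝ _ hyσ
  -- the curve t ↦ x + t • (x - y) stays in the affine span
  have hgS : ∀ t : ℝ, x + t • (x - y) ∈ S := by
    intro t
    have := AffineSubspace.smul_vsub_vadd_mem S t hxS hyS hxS
    simpa [vsub_eq_sub, vadd_eq_add, add_comm] using this
  have hG : Continuous fun t : ℝ => (⟨x + t • (x - y), hgS t⟩ : S) := by
    apply Continuous.subtype_mk
    continuity
  have h0 : (0 : ℝ) ∈ (fun t : ℝ => (⟨x + t • (x - y), hgS t⟩ : S)) ⁻¹'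
      (interior ((↑) ⁻¹' (σ : Set (Fin n → ℝ)) : Set S)) := by
    have : (⟨x + (0:ℝ) • (x - y), hgS 0⟩ : S) = x' := by
      ext; simp [hx'val]
    simp only [Set.mem_preimage, this]
    exact hx'int
  have hopen : IsOpen ((fun t : ℝ => (⟨x + t • (x - y), hgS t⟩ : S)) ⁻¹'
      (interior ((↑) ⁻¹' (σ : Set (Fin n → ℝ)) : Set S))) :=
    hG.isOpen_preimage _ isOpen_interior
  obtain ⟨δ, hδ, hball⟩ := Metric.isOpen_iff.mp hopen 0 h0
  set t := δ / 2 with ht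
  have htpos : 0 < t := by positivity
  have htmem : t ∈ Metric.ball (0 : ℝ) δ := by
    simp only [Metric.mem_ball, Real.dist_eq, sub_zero]
    rw [abs_of_pos htpos]; linarith
  have hmem : x + t • (x - y) ∈ (σ : Set (Fin n → ℝ)) := by
    have := interior_subset (hball htmem)
    simpa using this
  refine ⟨t • φ y, ?_, ?_, ?_⟩
  · simp only [ne_eq, smul_eq_zero, not_or]
    exact ⟨ne_of_gt htpos, hφy⟩
  · exact ⟨t • y, σ.smul_mem htpos hyσ, by simp⟩
  · refine ⟨x + t • (x - y), hmem, ?_⟩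
    simp [hφx, smul_sub]
end

section
/- Let G ⊆ ℝ^n ∖ {0} be a finite set satisfying condition (†) (every positive real relation among distinct elements of G involves at least n+1 vectors). Let φ : ℝ^n → ℝ^m be a surjective linear map with 0 < m < n. Then the nonnegative hull of G ∩ ker(φ) is not equal to ker(φ). In particular, G ∩ ker(φ) does not positively span the subspace ker(φ). -/
open Classical

private lemma finrank_ker_aux {n m : ℕ} (φ : (Fin n → ℝ) →ₗ[ℝ] (Fin m → ℝ))
    (hφ : Function.Surjective φ) :
    Module.finrank ℝ (LinearMap.ker φ) = n - m := by
  have h1 := LinearMap.finrank_range_add_finrank_ker φ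
  rw [LinearMap.range_eq_top.mpr hφ] at h1
  rw [finrank_top] at h1
  simp only [Module.finrank_pi, Fintype.card_fin] at h1
  omega

/-- If `G ⊆ ℝⁿ ∖ {0}` is finite and satisfies condition (†), and
`φ : ℝⁿ → ℝᵐ` is a surjective linear map with `0 < m < n`, then the elements
of `G` lying in `ker φ` do not positively span `ker φ`: some vector of `ker φ`
is not a nonnegative combination of them. -/
theorem stmt_7 {n m : ℕ} (G : Finset (Fin n → ℝ)) (h0 : (0 : Fin n → ℝ) ∉ G)
    (hdag : ∀ S : Finset (Fin n → ℝ), S ⊆ G →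
      ∀ a : (Fin n → ℝ) → ℝ, (∀ v ∈ S, 0 < a v) → ∑ v ∈ S, a v • v = 0 →
        S.Nonempty → n + 1 ≤ S.card)
    (φ : (Fin n → ℝ) →ₗ[ℝ] (Fin m → ℝ)) (hφ : Function.Surjective φ)
    (hm : 0 < m) (hmn : m < n) :
    ∃ x ∈ LinearMap.ker φ, ¬ ∃ c : (Fin n → ℝ) → ℝ, (∀ v, 0 ≤ c v) ∧
      x = ∑ v ∈ G.filter (fun v => v ∈ LinearMap.ker φ), c v • v := by
  classical
  set K := G.filter (fun v => v ∈ LinearMap.ker φ) with hKdef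
  have hrank : Module.finrank ℝ (LinearMap.ker φ) = n - m := finrank_ker_aux φ hφ
  -- the kernel is nontrivial
  have hnt : Nontrivial (LinearMap.ker φ) := by
    rw [← Module.finrank_pos_iff (R := ℝ), hrank]; omega
  obtain ⟨y, hy⟩ := exists_ne (0 : LinearMap.ker φ)
  by_contra hcon
  push_neg at hcon
  -- key elimination lemma
  have key : ∀ N : ℕ, ∀ S : Finset (Fin n → ℝ), S.card ≤ N → S ⊆ K → S.Nonempty →
      ∀ a : (Fin n → ℝ) → ℝ, (∀ v ∈ S, 0 < a v) → ∑ v ∈ S, a v • v = 0 → False := by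
    intro N
    induction N with
    | zero =>
      intro S hcard hsub hne a hpos hrel
      rw [Nat.le_zero, Finset.card_eq_zero] at hcard
      exact hne.ne_empty hcard
    | succ N ih =>
      intro S hcard hsub hne a hpos hrel
      have hSG : S ⊆ G := hsub.trans (Finset.filter_subset _ _)
      have hbig : n + 1 ≤ S.card := hdag S hSG a hpos hrel hne
      have hSker : ∀ v ∈ S, v ∈ LinearMap.ker φ := fun v hv =>
        (Finset.mem_filter.mp (hsub hv)).2
      obtain ⟨w, hw⟩ := hne
      -- lift `S.erase w` into the kernel
      set e : (Fin n → ℝ) → LinearMap.ker φ := fun v =>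
        if h : v ∈ LinearMap.ker φ then ⟨v, h⟩ else 0 with he
      have heS : ∀ v ∈ S, (e v : Fin n → ℝ) = v := by
        intro v hv
        simp only [he]
        rw [dif_pos (hSker v hv)]
      have hinj : Set.InjOn e (S.erase w) := by
        intro x hx y hy hxy
        have : (e x : Fin n → ℝ) = (e y : Fin n → ℝ) := by rw [hxy]
        rwa [heS x (Finset.mem_of_mem_erase hx), heS y (Finset.mem_of_mem_erase hy)] at this
      set t : Finset (LinearMap.ker φ) := (S.erase w).image e with ht
      have htcard : Module.finrank ℝ (LinearMap.ker φ) < t.card := by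
        rw [ht, Finset.card_image_of_injOn hinj, Finset.card_erase_of_mem hw, hrank]
        omega
      obtain ⟨g, hgsum, x₀, hx₀t, hx₀⟩ :=
        Module.exists_nontrivial_relation_of_finrank_lt_card htcard
      -- transfer the relation back to ℝⁿ
      have hgsum' : ∑ x ∈ t, g x • (x : Fin n → ℝ) = 0 := by
        have := congrArg (Submodule.subtype (LinearMap.ker φ)) hgsum
        simpa using this
      set b : (Fin n → ℝ) → ℝ := fun v => g (e v) with hb
      have hbsum : ∑ v ∈ S.erase w, b v • v = 0 := by
        rw [← hgsum', ht, Finset.sum_image hinj]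
        refine Finset.sum_congr rfl fun v hv => ?_
        rw [heS v (Finset.mem_of_mem_erase hv)]
      obtain ⟨v₀, hv₀mem, hv₀⟩ : ∃ v ∈ S.erase w, b v ≠ 0 := by
        obtain ⟨v, hv, hev⟩ := Finset.mem_image.mp hx₀t
        exact ⟨v, hv, by rw [hb]; simp only [hev]; exact hx₀⟩
      -- extend to S, zero at w, and fix sign
      set B : (Fin n → ℝ) → ℝ := fun v =>
        if v = w then 0 else if 0 < b v₀ then b v else -b v with hB
      have hBw : B w = 0 := by simp [hB]
      have hv₀w : v₀ ≠ w := Finset.ne_of_mem_erase hv₀mem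
      have hBv₀ : 0 < B v₀ := by
        rcases lt_or_gt_of_ne hv₀ with h | h
        · simp [hB, hv₀w, not_lt.mpr h.le]; linarith
        · simp [hB, hv₀w, h]
      have hBsum : ∑ v ∈ S, B v • v = 0 := by
        rw [← Finset.add_sum_erase _ _ hw, hBw, zero_smul, zero_add]
        by_cases hpos₀ : 0 < b v₀
        · rw [← hbsum]
          refine Finset.sum_congr rfl fun v hv => ?_
          simp [hB, Finset.ne_of_mem_erase hv, hpos₀]
        · have : ∑ v ∈ S.erase w, B v • v = -∑ v ∈ S.erase w, b v • v := by
            rw [← Finset.sum_neg_distrib]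
            refine Finset.sum_congr rfl fun v hv => ?_
            simp [hB, Finset.ne_of_mem_erase hv, hpos₀, neg_smul]
          rw [this, hbsum, neg_zero]
      -- minimize a v / B v over positive B
      set T : Finset (Fin n → ℝ) := S.filter (fun v => 0 < B v) with hT
      have hv₀T : v₀ ∈ T := Finset.mem_filter.mpr ⟨Finset.mem_of_mem_erase hv₀mem, hBv₀⟩
      obtain ⟨u, huT, humin⟩ := T.exists_min_image (fun v => a v / B v) ⟨v₀, hv₀T⟩
      have huS : u ∈ S := (Finset.mem_filter.mp huT).1
      have hBu : 0 < B u := (Finset.mem_filter.mp huT).2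
      set t₀ : ℝ := a u / B u with ht₀
      have ht₀pos : 0 < t₀ := div_pos (hpos u huS) hBu
      set a' : (Fin n → ℝ) → ℝ := fun v => a v - t₀ * B v with ha'
      have ha'nonneg : ∀ v ∈ S, 0 ≤ a' v := by
        intro v hv
        by_cases hBv : 0 < B v
        · have hmin := humin v (Finset.mem_filter.mpr ⟨hv, hBv⟩)
          have : t₀ * B v ≤ a v := by
            rw [ht₀, div_mul_eq_mul_div, div_le_iff₀ hBu] at *
            calc a u * B v ≤ (a v / B v) * B u * B v := by
                  have := humin v (Finset.mem_filter.mpr ⟨hv, hBv⟩)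
                  nlinarith [mul_le_mul_of_nonneg_right this hBu.le]
              _ = a v / B v * B v * B u := by ring
              _ = a v * B u := by rw [div_mul_cancel₀ _ (ne_of_gt hBv)]
          simp [ha']; linarith
        · have h1 : t₀ * B v ≤ 0 := mul_nonpos_of_nonneg_of_nonpos ht₀pos.le (not_lt.mp hBv)
          have := hpos v hv
          simp [ha']; linarith
      have ha'u : a' u = 0 := by
        simp [ha', ht₀, div_mul_cancel₀ _ (ne_of_gt hBu)]
      have ha'w : 0 < a' w := by
        simp [ha', hBw]; exact hpos w hw
      have ha'sum : ∑ v ∈ S, a' v • v = 0 := by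
        have : ∑ v ∈ S, a' v • v = ∑ v ∈ S, a v • v - t₀ • ∑ v ∈ S, B v • v := by
          rw [Finset.smul_sum, ← Finset.sum_sub_distrib]
          refine Finset.sum_congr rfl fun v hv => ?_
          simp [ha', sub_smul, smul_smul]
        rw [this, hrel, hBsum, smul_zero, sub_zero]
      -- pass to the support of a'
      set S' : Finset (Fin n → ℝ) := S.filter (fun v => a' v ≠ 0) with hS'
      have hS'sub : S' ⊆ S := Finset.filter_subset _ _
      have hwS' : w ∈ S' := Finset.mem_filter.mpr ⟨hw, ne_of_gt ha'w⟩
      have hS'erase : S' ⊆ S.erase u := by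
        intro v hv
        obtain ⟨hvS, hva⟩ := Finset.mem_filter.mp hv
        refine Finset.mem_erase.mpr ⟨?_, hvS⟩
        rintro rfl; exact hva ha'u
      have hS'card : S'.card ≤ N := by
        have h1 : S'.card ≤ (S.erase u).card := Finset.card_le_card hS'erase
        have h2 : (S.erase u).card = S.card - 1 := Finset.card_erase_of_mem huS
        omega
      have ha'pos : ∀ v ∈ S', 0 < a' v := by
        intro v hv
        obtain ⟨hvS, hva⟩ := Finset.mem_filter.mp hv
        exact lt_of_le_of_ne (ha'nonneg v hvS) (Ne.symm hva)
      have ha'sum' : ∑ v ∈ S', a' v • v = 0 := by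
        rw [← ha'sum]
        refine Finset.sum_filter_of_ne fun v hv hne' => ?_
        intro h; apply hne'; rw [h, zero_smul]
      exact ih S' hS'card (hS'sub.trans hsub) ⟨w, hwS'⟩ a' ha'pos ha'sum'
  -- produce an initial positive relation from positive spanning
  obtain ⟨c, hc, hx⟩ := hcon y.1 y.2
  obtain ⟨c', hc', hx'⟩ := hcon (-y.1) (neg_mem y.2)
  set d : (Fin n → ℝ) → ℝ := fun v => c v + c' v with hd
  have hdsum : ∑ v ∈ K, d v • v = 0 := by
    have : ∑ v ∈ K, d v • v = ∑ v ∈ K, c v • v + ∑ v ∈ K, c' v • v := by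
      rw [← Finset.sum_add_distrib]
      exact Finset.sum_congr rfl fun v _ => by simp [hd, add_smul]
    rw [this, ← hx, ← hx']
    simp
  set S₀ : Finset (Fin n → ℝ) := K.filter (fun v => d v ≠ 0) with hS₀
  have hS₀sum : ∑ v ∈ S₀, d v • v = 0 := by
    rw [← hdsum]
    refine Finset.sum_filter_of_ne fun v hv hne' => ?_
    intro h; apply hne'; rw [h, zero_smul]
  have hS₀ne : S₀.Nonempty := by
    rw [Finset.nonempty_iff_ne_empty]
    intro hemp
    have hall : ∀ v ∈ K, d v = 0 := by
      intro v hv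
      by_contra hne'
      have : v ∈ S₀ := Finset.mem_filter.mpr ⟨hv, hne'⟩
      rw [hemp] at this; exact absurd this (Finset.notMem_empty v)
    have hcz : ∀ v ∈ K, c v = 0 := by
      intro v hv
      have h1 := hall v hv
      have h2 := hc v
      have h3 := hc' v
      simp [hd] at h1
      linarith
    have : y.1 = 0 := by
      rw [hx]
      exact Finset.sum_eq_zero fun v hv => by rw [hcz v hv, zero_smul]
    exact hy (Subtype.ext this)
  have hS₀pos : ∀ v ∈ S₀, 0 < d v := by
    intro v hv
    obtain ⟨hvK, hvd⟩ := Finset.mem_filter.mp hv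
    have h2 := hc v
    have h3 := hc' v
    rcases lt_or_eq_of_le (by simp [hd]; linarith : (0:ℝ) ≤ d v) with h | h
    · exact h
    · exact absurd h.symm hvd
  exact key S₀.card S₀ le_rfl (Finset.filter_subset _ _) hS₀ne d hS₀pos hS₀sum
end

section
/- Let Δ be a finite set of strongly convex polyhedral cones in ℝ^n forming a fan whose support is all of ℝ^n (a complete fan), and let φ : ℝ^n → ℝ^m be a linear map such that for every σ ∈ Δ, the image φ(σ) is strongly convex (contains no line). Then the set Δ_0 = {σ ∈ Δ : σ ⊆ ker(φ)} is a fan whose support equals ker(φ). -/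
/-!
For a cone `σ = cone(s)` of `Δ`, the image `φ(σ)` is strongly convex, so `0` is not in the
convex hull of the nonzero vectors `φ v`, `v ∈ s`, and a separating functional `f` is positive on
all of them. Then `f ∘ φ` is nonnegative on `σ` and vanishes exactly on `σ ∩ ker φ`, which is
therefore a face of `σ`, hence a cone of `Δ`. Since `Δ` is complete, these faces cover `ker φ`.
-/

/-- The cone generated by a finite set of vectors: all nonnegative linear
combinations. -/
def nonnegHull {n : ℕ} (s : Finset (Fin n → ℝ)) : Set (Fin n → ℝ) :=
  {x | ∃ c : (Fin n → ℝ) → ℝ, (∀ v, 0 ≤ c v) ∧ x = ∑ v ∈ s, c v • v}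

/-- A polyhedral cone: the nonnegative hull of finitely many vectors. -/
def IsPolyhedralCone {n : ℕ} (σ : Set (Fin n → ℝ)) : Prop :=
  ∃ s : Finset (Fin n → ℝ), σ = nonnegHull s

/-- A cone is strongly convex if it contains no nonzero vector together with
its negative. -/
def StronglyConvex {n : ℕ} (σ : Set (Fin n → ℝ)) : Prop :=
  ∀ x ∈ σ, -x ∈ σ → x = 0

/-- `τ` is a face of `σ`: the zero locus on `σ` of a linear functional that is
nonnegative on `σ`. -/
def IsFaceOf {n : ℕ} (τ σ : Set (Fin n → ℝ)) : Prop :=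
  ∃ f : (Fin n → ℝ) →ₗ[ℝ] ℝ, (∀ x ∈ σ, 0 ≤ f x) ∧ τ = {x ∈ σ | f x = 0}

/-- A fan: a finite collection of strongly convex polyhedral cones, closed
under taking faces, such that the intersection of any two members is a face of
each. -/
def IsFan {n : ℕ} (Δ : Set (Set (Fin n → ℝ))) : Prop :=
  Δ.Finite ∧
  (∀ σ ∈ Δ, IsPolyhedralCone σ ∧ StronglyConvex σ) ∧
  (∀ σ ∈ Δ, ∀ τ, IsFaceOf τ σ → τ ∈ Δ) ∧
  (∀ σ ∈ Δ, ∀ σ' ∈ Δ, IsFaceOf (σ ∩ σ') σ ∧ IsFaceOf (σ ∩ σ') σ')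

lemma IsFaceOf.subset {n : ℕ} {τ σ : Set (Fin n → ℝ)} (h : IsFaceOf τ σ) : τ ⊆ σ := by
  obtain ⟨f, -, rfl⟩ := h
  exact Set.sep_subset _ _

lemma IsFan.sep_subset {n : ℕ} {Δ : Set (Set (Fin n → ℝ))} (hΔ : IsFan Δ) (K : Set (Fin n → ℝ)) :
    IsFan {σ ∈ Δ | σ ⊆ K} := by
  obtain ⟨hfin, hcones, hfaces, hinter⟩ := hΔ
  exact ⟨hfin.subset (Set.sep_subset _ _), fun σ hσ => hcones σ hσ.1,
    fun σ hσ τ hτ => ⟨hfaces σ hσ.1 τ hτ, hτ.subset.trans hσ.2⟩,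
    fun σ hσ σ' hσ' => hinter σ hσ.1 σ' hσ'.1⟩

lemma nonnegHull_eq_hull {n : ℕ} (s : Finset (Fin n → ℝ)) :
    nonnegHull s = PointedCone.hull ℝ (s : Set (Fin n → ℝ)) := by
  ext x
  constructor
  · rintro ⟨c, hc, rfl⟩
    exact Submodule.sum_mem _ fun v hv =>
      PointedCone.smul_mem _ (hc v) (PointedCone.subset_hull hv)
  · intro hx
    obtain ⟨c, -, rfl⟩ := Submodule.mem_span_finset.1 hx
    exact ⟨fun v => c v, fun v => (c v).2, by simp⟩

lemma PointedCone.zero_notMem_convexHull {E : Type*} [AddCommGroup E] [Module ℝ E]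
    (C : PointedCone ℝ E) (hC : ∀ x ∈ C, -x ∈ C → x = 0) {t : Finset E}
    (htC : (t : Set E) ⊆ C) (ht0 : (0 : E) ∉ t) : (0 : E) ∉ convexHull ℝ (t : Set E) := by
  classical
  rw [Finset.mem_convexHull']
  rintro ⟨w, hw0, hw1, hsum⟩
  obtain ⟨i, hi, hwi⟩ : ∃ i ∈ t, 0 < w i := by
    by_contra! h
    have : ∑ y ∈ t, w y = 0 := Finset.sum_eq_zero fun y hy => le_antisymm (h y hy) (hw0 y hy)
    linarith
  have hmem : ∀ y ∈ t, w y • y ∈ C := fun y hy => C.smul_mem (hw0 y hy) (htC hy)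
  have hneg : -(w i • i) = ∑ y ∈ t.erase i, w y • y := by
    rw [neg_eq_iff_add_eq_zero, Finset.add_sum_erase t (fun y => w y • y) hi, hsum]
  have hzero : w i • i = 0 :=
    hC _ (hmem i hi) (hneg ▸ C.sum_mem fun y hy => hmem y (Finset.mem_of_mem_erase hy))
  rw [smul_eq_zero_iff_right hwi.ne'] at hzero
  exact ht0 (hzero ▸ hi)

lemma exists_forall_pos_of_zero_notMem_convexHull {E : Type*} [NormedAddCommGroup E]
    [NormedSpace ℝ E] {t : Finset E} (h0 : (0 : E) ∉ convexHull ℝ (t : Set E)) :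
    ∃ f : E →ₗ[ℝ] ℝ, ∀ w ∈ t, 0 < f w := by
  obtain ⟨f, u, hu0, hu⟩ := geometric_hahn_banach_point_closed (convex_convexHull ℝ _)
    (t.finite_toSet.isClosed_convexHull (𝕜 := ℝ)) h0
  rw [map_zero] at hu0
  exact ⟨f.toLinearMap, fun w hw => hu0.trans (hu w (subset_convexHull ℝ _ hw))⟩

lemma PointedCone.exists_pos_of_ne_zero {E : Type*} [NormedAddCommGroup E] [NormedSpace ℝ E]
    (C : PointedCone ℝ E) (hC : ∀ x ∈ C, -x ∈ C → x = 0) {t : Finset E}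
    (htC : (t : Set E) ⊆ C) : ∃ f : E →ₗ[ℝ] ℝ, ∀ w ∈ t, w ≠ 0 → 0 < f w := by
  classical
  obtain ⟨f, hf⟩ := exists_forall_pos_of_zero_notMem_convexHull <|
    C.zero_notMem_convexHull hC ((Finset.coe_subset.2 (t.erase_subset 0)).trans htC)
      (t.notMem_erase 0)
  exact ⟨f, fun w hw hw0 => hf w (Finset.mem_erase.2 ⟨hw0, hw⟩)⟩

-- The conjunction is the invariant that survives sums: `g y + g z = 0` with both terms
-- nonnegative forces `g y = g z = 0`.
lemma PointedCone.nonneg_and_map_eq_zero_of_mem_hull {E F : Type*} [AddCommGroup E]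
    [Module ℝ E] [AddCommGroup F] [Module ℝ F] {s : Set E} {g : E →ₗ[ℝ] ℝ} {φ : E →ₗ[ℝ] F}
    (hs : ∀ v ∈ s, 0 ≤ g v ∧ (g v = 0 → φ v = 0)) {y : E} (hy : y ∈ PointedCone.hull ℝ s) :
    0 ≤ g y ∧ (g y = 0 → φ y = 0) := by
  induction hy using Submodule.span_induction with
  | mem v hv => exact hs v hv
  | zero => simp
  | add y z _ _ hy hz =>
    refine ⟨map_add g y z ▸ add_nonneg hy.1 hz.1, fun h => ?_⟩
    rw [map_add] at h
    rw [map_add, hy.2 (by linarith [hy.1, hz.1]), hz.2 (by linarith [hy.1, hz.1]), add_zero]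
  | smul c y _ hy =>
    rw [← Nonneg.coe_smul, map_smul, map_smul, smul_eq_mul, smul_eq_zero, mul_eq_zero]
    exact ⟨mul_nonneg c.2 hy.1, Or.imp_right hy.2⟩

lemma isFaceOf_inter_ker {n m : ℕ} (s : Finset (Fin n → ℝ))
    (φ : (Fin n → ℝ) →ₗ[ℝ] (Fin m → ℝ)) (hsc : StronglyConvex (φ '' nonnegHull s)) :
    IsFaceOf (nonnegHull s ∩ LinearMap.ker φ) (nonnegHull s) := by
  rw [nonnegHull_eq_hull] at hsc ⊢
  set σ := PointedCone.hull ℝ (s : Set (Fin n → ℝ))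
  have himage : (s.image φ : Set (Fin m → ℝ)) ⊆ σ.map φ := by
    rw [Finset.coe_image, PointedCone.coe_map]
    exact Set.image_mono PointedCone.subset_hull
  obtain ⟨f, hf⟩ := (σ.map φ).exists_pos_of_ne_zero hsc himage
  have hσ : ∀ y ∈ σ, 0 ≤ f (φ y) ∧ (f (φ y) = 0 → φ y = 0) := by
    refine fun y => PointedCone.nonneg_and_map_eq_zero_of_mem_hull (g := f ∘ₗ φ) fun v hv => ?_
    by_cases hφv : φ v = 0
    · simp [hφv]
    · have := hf (φ v) (Finset.mem_image_of_mem φ hv) hφv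
      exact ⟨this.le, fun h => absurd h this.ne'⟩
  refine ⟨f ∘ₗ φ, fun y hy => (hσ y hy).1, Set.ext fun y => ⟨?_, ?_⟩⟩
  · rintro ⟨hy, hker⟩
    exact ⟨hy, by simp [LinearMap.mem_ker.1 hker]⟩
  · rintro ⟨hy, hgy⟩
    exact ⟨hy, (hσ y hy).2 hgy⟩

/-- If `Δ` is a complete fan in `ℝⁿ` and `φ : ℝⁿ → ℝᵐ` is a linear map whose
image `φ(σ)` is strongly convex for every `σ ∈ Δ`, then
`Δ₀ = {σ ∈ Δ : σ ⊆ ker φ}` is a fan with support exactly `ker φ`. -/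
theorem stmt_14 {n m : ℕ} (Δ : Set (Set (Fin n → ℝ))) (hΔ : IsFan Δ)
    (hcomplete : ⋃₀ Δ = Set.univ)
    (φ : (Fin n → ℝ) →ₗ[ℝ] (Fin m → ℝ))
    (hsc : ∀ σ ∈ Δ, StronglyConvex (φ '' σ)) :
    IsFan {σ ∈ Δ | σ ⊆ (LinearMap.ker φ : Set (Fin n → ℝ))} ∧
      ⋃₀ {σ ∈ Δ | σ ⊆ (LinearMap.ker φ : Set (Fin n → ℝ))} =
        (LinearMap.ker φ : Set (Fin n → ℝ)) := by
  refine ⟨hΔ.sep_subset _, (Set.sUnion_subset fun σ hσ => hσ.2).antisymm fun x hx => ?_⟩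
  obtain ⟨-, hcones, hfaces, -⟩ := hΔ
  obtain ⟨σ, hσ, hxσ⟩ : x ∈ ⋃₀ Δ := hcomplete ▸ Set.mem_univ x
  obtain ⟨⟨s, rfl⟩, -⟩ := hcones σ hσ
  exact ⟨_, ⟨hfaces _ hσ _ (isFaceOf_inter_ker s φ (hsc _ hσ)), Set.inter_subset_right⟩,
    hxσ, hx⟩
end
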